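/- Let Φ be an irreducible generalized root system in V with symmetric bilinear form, and let U be a subspace of the radical R of the form. Then the image Φ/U = {α + U : α ∈ Φ} is an irreducible generalized root system in V/U with respect to the induced bilinear form. -/
import Mathlib


/-- A generalized root system in its own span (no spanning requirement on the ambient
space): a nonempty set of non-isotropic vectors, closed under its own reflections and
crystallographic. -/
structure IsPreGRS {V : Type*} [AddCommGroup V] [Module ℝ V]
    (B : LinearMap.BilinForm ℝ V) (Φ : Set V) : Prop where
  nonempty : Φ.Nonempty
  non_isotropic : ∀ α ∈ Φ, B α α ≠ 0
  refl_mem : ∀ α ∈ Φ, ∀ β ∈ Φ, β - (2 * B α β / B α α) • α ∈ Φ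
  crystallographic : ∀ α ∈ Φ, ∀ β ∈ Φ, ∃ z : ℤ, 2 * B β α / B β β = (z : ℝ)

/-- A generalized root system spanning the ambient space. -/
structure IsGRS {V : Type*} [AddCommGroup V] [Module ℝ V]
    (B : LinearMap.BilinForm ℝ V) (Φ : Set V) extends IsPreGRS B Φ : Prop where
  spans : Submodule.span ℝ Φ = ⊤

/-- Irreducibility: `Φ` is not a union of two mutually orthogonal generalized root
systems. -/
def GRSIrreducible {V : Type*} [AddCommGroup V] [Module ℝ V]
    (B : LinearMap.BilinForm ℝ V) (Φ : Set V) : Prop :=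
  ¬ ∃ Φ₁ Φ₂ : Set V, IsPreGRS B Φ₁ ∧ IsPreGRS B Φ₂ ∧ Φ = Φ₁ ∪ Φ₂ ∧
      ∀ x ∈ Φ₁, ∀ y ∈ Φ₂, B x y = 0

/-- If `Φ` is an irreducible generalized root system and `U` a subspace of the radical
of the form, then the image of `Φ` in `V ⧸ U` is an irreducible generalized root system
with respect to the induced form. -/
theorem stmt4 {V : Type*} [AddCommGroup V] [Module ℝ V]
    (B : LinearMap.BilinForm ℝ V) (hB : B.IsSymm)
    (Φ : Set V) (hΦ : IsGRS B Φ) (hirr : GRSIrreducible B Φ)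
    (U : Submodule ℝ V) (hU : U ≤ LinearMap.ker B)
    (B' : LinearMap.BilinForm ℝ (V ⧸ U))
    (hB' : ∀ v w : V, B' (Submodule.Quotient.mk v) (Submodule.Quotient.mk w) = B v w) :
    IsGRS B' (Submodule.Quotient.mk '' Φ) ∧
      GRSIrreducible B' (Submodule.Quotient.mk '' Φ) := by
  have hpre : IsPreGRS B' (Submodule.Quotient.mk '' Φ) := by
    constructor
    · exact hΦ.nonempty.image _
    · rintro _ ⟨α, hα, rfl⟩
      rw [hB']
      exact hΦ.non_isotropic α hα
    · rintro _ ⟨α, hα, rfl⟩ _ ⟨β, hβ, rfl⟩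
      rw [hB', hB']
      refine ⟨β - (2 * B α β / B α α) • α, hΦ.refl_mem α hα β hβ, ?_⟩
      simp [Submodule.Quotient.mk_sub, Submodule.Quotient.mk_smul]
    · rintro _ ⟨α, hα, rfl⟩ _ ⟨β, hβ, rfl⟩
      rw [hB', hB']
      exact hΦ.crystallographic α hα β hβ
  have hspan : Submodule.span ℝ (Submodule.Quotient.mk '' Φ : Set (V ⧸ U)) = ⊤ := by
    have : (Submodule.Quotient.mk '' Φ : Set (V ⧸ U)) = U.mkQ '' Φ := rfl
    rw [this, ← Submodule.map_span, hΦ.spans, Submodule.map_top,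
      LinearMap.range_eq_top.mpr (Submodule.mkQ_surjective U)]
  refine ⟨⟨hpre, hspan⟩, ?_⟩
  rintro ⟨Ψ₁, Ψ₂, h1, h2, hunion, horth⟩
  apply hirr
  refine ⟨Φ ∩ Submodule.Quotient.mk ⁻¹' Ψ₁, Φ ∩ Submodule.Quotient.mk ⁻¹' Ψ₂, ?_, ?_, ?_, ?_⟩
  · constructor
    · obtain ⟨x, hx⟩ := h1.nonempty
      have : x ∈ Submodule.Quotient.mk '' Φ := hunion ▸ Set.mem_union_left _ hx
      obtain ⟨α, hα, rfl⟩ := this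
      exact ⟨α, hα, hx⟩
    · exact fun α hα => hΦ.non_isotropic α hα.1
    · rintro α ⟨hα, hα1⟩ β ⟨hβ, hβ1⟩
      refine ⟨hΦ.refl_mem α hα β hβ, ?_⟩
      have := h1.refl_mem _ hα1 _ hβ1
      rwa [hB', hB', ← Submodule.Quotient.mk_smul, ← Submodule.Quotient.mk_sub] at this
    · exact fun α hα β hβ => hΦ.crystallographic α hα.1 β hβ.1
  · constructor
    · obtain ⟨x, hx⟩ := h2.nonempty
      have : x ∈ Submodule.Quotient.mk '' Φ := hunion ▸ Set.mem_union_right _ hx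
      obtain ⟨α, hα, rfl⟩ := this
      exact ⟨α, hα, hx⟩
    · exact fun α hα => hΦ.non_isotropic α hα.1
    · rintro α ⟨hα, hα2⟩ β ⟨hβ, hβ2⟩
      refine ⟨hΦ.refl_mem α hα β hβ, ?_⟩
      have := h2.refl_mem _ hα2 _ hβ2
      rwa [hB', hB', ← Submodule.Quotient.mk_smul, ← Submodule.Quotient.mk_sub] at this
    · exact fun α hα β hβ => hΦ.crystallographic α hα.1 β hβ.1
  · ext α
    constructor
    · intro hα
      have : (Submodule.Quotient.mk α : V ⧸ U) ∈ Ψ₁ ∪ Ψ₂ := by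
        rw [← hunion]; exact ⟨α, hα, rfl⟩
      rcases this with h | h
      · exact Or.inl ⟨hα, h⟩
      · exact Or.inr ⟨hα, h⟩
    · rintro (⟨h, _⟩ | ⟨h, _⟩) <;> exact h
  · rintro x ⟨hx, hx1⟩ y ⟨hy, hy2⟩
    have := horth _ hx1 _ hy2
    rwa [hB'] at this
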